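/- Let $(X,d)$ be a metric space and $S(t) : X \to X$ a semigroup. Suppose: (i) there exist $c_0 \ge 0$ and $L \ge 0$ such that $d(S(t)x, S(t)y) \le c_0 e^{Lt} d(x,y)$ for all $x,y \in X$, $t \ge 0$; (ii) there are sets $B, B_1, E \subset X$ and constants $M, J_0 \ge 0$, $\gamma, \omega_0 > 0$ such that $\mathrm{dist}(S(t)B, B_1) \le M e^{-\gamma t}$ and $\mathrm{dist}(S(t)B_1, E) \le J_0 e^{-\omega_0 t}$ for all $t \ge 0$, where $\mathrm{dist}$ is the Hausdorff semidistance. Then $\mathrm{dist}(S(t)B, E) \le J e^{-\omega t}$ for all $t \ge 0$, with $J = c_0 M + J_0$ and $\omega = \frac{\gamma\omega_0}{L + \gamma + \omega_0}$. -/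

import Mathlib

open EMetric

/-- Hausdorff semidistance `dist(A,B) = sup_{a∈A} inf_{b∈B} d(a,b)` (in `ℝ≥0∞`). -/
noncomputable def semidist {X : Type*} [MetricSpace X] (A B : Set X) : ENNReal :=
  ⨆ a ∈ A, EMetric.infEdist a B

/-!
Split `t = r + s`. By time `s` the orbit of `B` is within `M e^{-γ s}` of `B₁`; the flow
during the remaining time `r` stretches this by at most `c₀ e^{L r}`, and moves `B₁` to within
`J₀ e^{-ω₀ r}` of `E`. Choosing `r = γ t / (L + γ + ω₀)` makes both exponents equal to
`-γ ω₀ t / (L + γ + ω₀)`.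
-/

open Metric
open scoped NNReal ENNReal

theorem LipschitzWith.infEDist_image_le {X Y : Type*} [PseudoEMetricSpace X]
    [PseudoEMetricSpace Y] {f : X → Y} {K : ℝ≥0} (hf : LipschitzWith K f) {x : X} {s : Set X}
    (hx : infEDist x s ≠ ∞) : infEDist (f x) (f '' s) ≤ K * infEDist x s := by
  rcases eq_or_ne K 0 with rfl | hK
  · obtain ⟨y, hy⟩ : s.Nonempty := Set.nonempty_iff_ne_empty.2 (by rintro rfl; simp at hx)
    calc infEDist (f x) (f '' s) ≤ edist (f x) (f y) :=
          infEDist_le_edist_of_mem (Set.mem_image_of_mem f hy)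
      _ ≤ (0 : ℝ≥0) * edist x y := hf x y
      _ = _ := by simp
  · have hK' : (K : ℝ≥0∞) ≠ 0 := by simpa using hK
    simp only [infEDist, ENNReal.mul_iInf_of_ne hK' ENNReal.coe_ne_top]
    exact le_iInf₂ fun y hy => (iInf₂_le (f y) (Set.mem_image_of_mem f hy)).trans (hf x y)

theorem infEDist_le_semidist {X : Type*} [MetricSpace X] {x : X} {A : Set X} (hx : x ∈ A)
    (B : Set X) : infEDist x B ≤ semidist A B :=
  le_iSup₂ (f := fun a (_ : a ∈ A) => infEDist a B) x hx

theorem infEDist_le_infEDist_add_semidist {X : Type*} [MetricSpace X] (x : X) (A B : Set X) :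
    infEDist x B ≤ infEDist x A + semidist A B := by
  rw [← tsub_le_iff_right, le_infEDist]
  intro y hy
  rw [tsub_le_iff_right]
  exact infEDist_le_edist_add_infEDist.trans (by gcongr; exact infEDist_le_semidist hy B)

theorem semidist_image_le_mul_add {X Y : Type*} [MetricSpace X] [MetricSpace Y] {f : X → Y}
    {K : ℝ≥0} (hf : LipschitzWith K f) {A B : Set X} (hAB : semidist A B ≠ ∞) (C : Set Y) :
    semidist (f '' A) C ≤ K * semidist A B + semidist (f '' B) C := by
  refine iSup₂_le ?_
  rintro _ ⟨x, hx, rfl⟩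
  have hxB := infEDist_le_semidist hx B
  calc infEDist (f x) C ≤ infEDist (f x) (f '' B) + semidist (f '' B) C :=
        infEDist_le_infEDist_add_semidist _ _ _
    _ ≤ K * semidist A B + semidist (f '' B) C := by
        gcongr
        exact (hf.infEDist_image_le (ne_top_of_le_ne_top hAB hxB)).trans (by gcongr)

theorem mul_exp_add_mul_exp_eq_at_balanced_split (c M J L γ ω₀ t : ℝ)
    (hD : L + γ + ω₀ ≠ 0) :
    c * Real.exp (L * (γ * t / (L + γ + ω₀)))
        * (M * Real.exp (-γ * (t - γ * t / (L + γ + ω₀))))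
      + J * Real.exp (-ω₀ * (γ * t / (L + γ + ω₀)))
      = (c * M + J) * Real.exp (-(γ * ω₀ / (L + γ + ω₀)) * t) := by
  have hfirst : L * (γ * t / (L + γ + ω₀)) + -γ * (t - γ * t / (L + γ + ω₀))
      = -(γ * ω₀ / (L + γ + ω₀)) * t := by
    field_simp
    ring
  have hsecond : -ω₀ * (γ * t / (L + γ + ω₀)) = -(γ * ω₀ / (L + γ + ω₀)) * t := by
    field_simp
  rw [mul_mul_mul_comm, ← Real.exp_add, hfirst, hsecond]
  ring

theorem stmt_6_general {X : Type*} [MetricSpace X] (S : ℝ → X → X)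
    (hSsemi : ∀ t s : ℝ, 0 ≤ t → 0 ≤ s → S (t + s) = S t ∘ S s)
    (c0 L : ℝ) (hc0 : 0 ≤ c0) (hL : 0 ≤ L)
    (hlip : ∀ (x y : X) (t : ℝ), 0 ≤ t →
      dist (S t x) (S t y) ≤ c0 * Real.exp (L * t) * dist x y)
    (B B1 E : Set X) (M J0 γ ω0 : ℝ)
    (hM : 0 ≤ M) (hJ0 : 0 ≤ J0) (hγ : 0 < γ) (hω0 : 0 < ω0)
    (hBB1 : ∀ t ≥ (0:ℝ), semidist (S t '' B) B1 ≤ ENNReal.ofReal (M * Real.exp (-γ * t)))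
    (hB1E : ∀ t ≥ (0:ℝ), semidist (S t '' B1) E ≤ ENNReal.ofReal (J0 * Real.exp (-ω0 * t))) :
    ∀ t ≥ (0:ℝ), semidist (S t '' B) E ≤
      ENNReal.ofReal ((c0 * M + J0) * Real.exp (-(γ * ω0 / (L + γ + ω0)) * t)) := by
  intro t ht
  have hD : 0 < L + γ + ω0 := by linarith
  set r := γ * t / (L + γ + ω0)
  have hr : 0 ≤ r := by positivity
  have hs : 0 ≤ t - r := by
    rw [sub_nonneg, div_le_iff₀ hD]
    nlinarith [mul_nonneg hL ht, mul_nonneg hω0.le ht]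
  have hflow : S t '' B = S r '' (S (t - r) '' B) := by
    rw [Set.image_image, ← Function.comp_def, ← hSsemi r (t - r) hr hs, add_sub_cancel]
  have hSr : LipschitzWith (c0 * Real.exp (L * r)).toNNReal (S r) :=
    LipschitzWith.of_dist_le' fun x y => hlip x y r hr
  calc semidist (S t '' B) E
      ≤ ENNReal.ofReal (c0 * Real.exp (L * r)) * semidist (S (t - r) '' B) B1
          + semidist (S r '' B1) E :=
        hflow ▸ semidist_image_le_mul_add hSr (ne_top_of_le_ne_top ENNReal.ofReal_ne_top
          (hBB1 _ hs)) E
    _ ≤ ENNReal.ofReal (c0 * Real.exp (L * r)) * ENNReal.ofReal (M * Real.exp (-γ * (t - r)))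
          + ENNReal.ofReal (J0 * Real.exp (-ω0 * r)) := by
        gcongr
        exacts [hBB1 _ hs, hB1E _ hr]
    _ = _ := by
        rw [← ENNReal.ofReal_mul (by positivity),
          ← ENNReal.ofReal_add (by positivity) (by positivity),
          mul_exp_add_mul_exp_eq_at_balanced_split _ _ _ _ _ _ _ hD.ne']

/-- Transitivity of exponential attraction (Fabrie–Galusinski–Miranville–Zelik). -/
theorem stmt_6 {X : Type*} [MetricSpace X] (S : ℝ → X → X)
    (hS0 : S 0 = id)
    (hSsemi : ∀ t s : ℝ, 0 ≤ t → 0 ≤ s → S (t + s) = S t ∘ S s)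
    (c0 L : ℝ) (hc0 : 0 ≤ c0) (hL : 0 ≤ L)
    (hlip : ∀ (x y : X) (t : ℝ), 0 ≤ t →
      dist (S t x) (S t y) ≤ c0 * Real.exp (L * t) * dist x y)
    (B B1 E : Set X) (M J0 γ ω0 : ℝ)
    (hM : 0 ≤ M) (hJ0 : 0 ≤ J0) (hγ : 0 < γ) (hω0 : 0 < ω0)
    (hBB1 : ∀ t ≥ (0:ℝ), semidist (S t '' B) B1 ≤ ENNReal.ofReal (M * Real.exp (-γ * t)))
    (hB1E : ∀ t ≥ (0:ℝ), semidist (S t '' B1) E ≤ ENNReal.ofReal (J0 * Real.exp (-ω0 * t))) :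
    ∀ t ≥ (0:ℝ), semidist (S t '' B) E ≤
      ENNReal.ofReal ((c0 * M + J0) * Real.exp (-(γ * ω0 / (L + γ + ω0)) * t)) :=
  stmt_6_general S hSsemi c0 L hc0 hL hlip B B1 E M J0 γ ω0 hM hJ0 hγ hω0 hBB1 hB1E
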